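/- arXiv:2407.04131 — 7 statements merged into one kernel-verified Lean document; each statement's English description precedes it below -/
import Mathlib

section
/- Let K ⊆ X be a compact subset and let U ⊆ X be a nonempty, relatively compact, open subset with K ⊆ U. Then every connected component of X ∖ K has nonempty intersection with U. -/
open Set Topology

/-- `E` is a connected component of the set `S` in `X`. -/
def IsCCIn {X : Type*} [TopologicalSpace X] (S E : Set X) : Prop :=
  ∃ x ∈ S, E = connectedComponentIn S x

/-- Every connected component of X ∖ K meets a nonempty relatively compact open set U ⊇ K. -/
theorem component_meets_relatively_compact_open {X : Type*} [TopologicalSpace X] [Nonempty X] [ConnectedSpace X]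
    [LocallyCompactSpace X] [LocallyConnectedSpace X] [SigmaCompactSpace X] [T2Space X]
    (K U : Set X) (hK : IsCompact K) (hUopen : IsOpen U) (hUne : U.Nonempty)
    (hUrc : IsCompact (closure U)) (hKU : K ⊆ U)
    (C : Set X) (hC : IsCCIn Kᶜ C) :
    (C ∩ U).Nonempty := by
  obtain ⟨x, hx, rfl⟩ := hC
  by_contra h
  rw [not_nonempty_iff_eq_empty] at h
  set C := connectedComponentIn Kᶜ x with hCdef
  have hCopen : IsOpen C := (hK.isClosed.isOpen_compl).connectedComponentIn
  have hCU : Disjoint (closure C) U := by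
    rw [disjoint_comm, disjoint_iff_inter_eq_empty, ← subset_empty_iff]
    calc U ∩ closure C ⊆ closure (U ∩ C) := hUopen.inter_closure
      _ = ∅ := by rw [inter_comm, h, closure_empty]
  have hCclosed : IsClosed C := by
    rw [← closure_eq_iff_isClosed]
    refine subset_antisymm (fun y hy => ?_) subset_closure
    have hyK : y ∈ Kᶜ := fun hyk => hCU.le_bot ⟨hy, hKU hyk⟩
    have hsub : insert y C ⊆ C := by
      apply IsPreconnected.subset_connectedComponentIn
      · exact IsPreconnected.subset_closure (isPreconnected_connectedComponentIn)
          (subset_insert _ _) (insert_subset hy subset_closure)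
      · exact mem_insert_iff.mpr (Or.inr (mem_connectedComponentIn hx))
      · exact insert_subset hyK (connectedComponentIn_subset _ _)
    exact hsub (mem_insert y C)
  have hCuniv : C = univ := (isClopen_iff.mp ⟨hCclosed, hCopen⟩).resolve_left
    (Nonempty.ne_empty ⟨x, mem_connectedComponentIn hx⟩)
  rw [hCuniv, univ_inter] at h
  exact hUne.ne_empty h
end

section
/- Let K ⊆ X be a compact subset and let 𝒜 be any collection of relatively compact connected components of X ∖ K. Then the union ⋃_{A∈𝒜} A is relatively compact. -/
open Set Topology

/-- A preconnected set meeting the interior of `t` and the complement of its closure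
meets the frontier of `t`. -/
lemma isPreconnected_inter_frontier_nonempty {X : Type*} [TopologicalSpace X] {s t : Set X}
    (hs : IsPreconnected s) (h1 : (s ∩ interior t).Nonempty)
    (h2 : (s \ closure t).Nonempty) : (s ∩ frontier t).Nonempty := by
  by_contra hfr
  rw [not_nonempty_iff_eq_empty] at hfr
  have hcov : s ⊆ interior t ∪ (closure t)ᶜ := by
    intro x hx
    by_contra hx'
    simp only [mem_union, not_or, notMem_compl_iff] at hx'
    exact (eq_empty_iff_forall_notMem.mp hfr) x ⟨hx, hx'.2, hx'.1⟩
  obtain ⟨x, -, hx1, hx2⟩ := hs (interior t) (closure t)ᶜ isOpen_interior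
    isClosed_closure.isOpen_compl hcov
    (h1.mono (inter_subset_inter_right s Subset.rfl)) h2
  exact hx2 (interior_subset_closure hx1)

/-- The union of any collection of relatively compact connected components of X ∖ K is
relatively compact. -/
theorem union_relatively_compact_components {X : Type*} [TopologicalSpace X] [Nonempty X] [ConnectedSpace X]
    [LocallyCompactSpace X] [LocallyConnectedSpace X] [SigmaCompactSpace X] [T2Space X]
    (K : Set X) (hK : IsCompact K) (𝒜 : Set (Set X))
    (h𝒜 : ∀ A ∈ 𝒜, IsCCIn Kᶜ A ∧ IsCompact (closure A)) :
    IsCompact (closure (⋃₀ 𝒜)) := by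
  by_cases hX : IsCompact (univ : Set X)
  · exact hX.of_isClosed_subset isClosed_closure (subset_univ _)
  have hKc : IsOpen (Kᶜ : Set X) := hK.isClosed.isOpen_compl
  -- each A ∈ 𝒜 is open and closure A \ A ⊆ K
  have hopenA : ∀ A ∈ 𝒜, IsOpen A := by
    rintro A hA
    obtain ⟨⟨a, ha, rfl⟩, -⟩ := h𝒜 A hA
    exact hKc.connectedComponentIn
  have key : ∀ A ∈ 𝒜, closure A \ A ⊆ K := by
    intro A hA x hx
    obtain ⟨⟨a, ha, rfl⟩, -⟩ := h𝒜 A hA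
    by_contra hxK
    have hxKc : x ∈ (Kᶜ : Set X) := hxK
    have hopen : IsOpen (connectedComponentIn Kᶜ x) := hKc.connectedComponentIn
    have hmem : x ∈ connectedComponentIn Kᶜ x := mem_connectedComponentIn hxKc
    obtain ⟨y, hy1, hy2⟩ := mem_closure_iff.mp hx.1 _ hopen hmem
    have h1 : connectedComponentIn Kᶜ x = connectedComponentIn Kᶜ y :=
      connectedComponentIn_eq hy1
    have h2 : connectedComponentIn Kᶜ a = connectedComponentIn Kᶜ y :=
      connectedComponentIn_eq hy2
    exact hx.2 (by rw [h2, ← h1]; exact hmem)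
  -- compact neighborhood L of K
  obtain ⟨L, hL, hKL⟩ := exists_compact_superset hK
  -- any A ∈ 𝒜 not contained in L meets the frontier of L
  have hmeet : ∀ A ∈ 𝒜, ¬ A ⊆ L → (A ∩ frontier L).Nonempty := by
    intro A hA hAL
    obtain ⟨⟨a, ha, hAe⟩, hc⟩ := h𝒜 A hA
    have hAne : A.Nonempty := ⟨a, hAe ▸ mem_connectedComponentIn ha⟩
    have hAconn : IsPreconnected A := hAe ▸ isPreconnected_connectedComponentIn
    have hclconn : IsPreconnected (closure A) := hAconn.closure
    -- closure A \ A is nonempty, else A clopen hence univ, contradicting noncompactness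
    have hdiff : (closure A \ A).Nonempty := by
      rw [nonempty_iff_ne_empty]
      intro h
      have hcl : closure A = A := Subset.antisymm
        (by intro x hx; by_contra hxA;
            exact (eq_empty_iff_forall_notMem.mp h) x ⟨hx, hxA⟩)
        subset_closure
      have : IsClopen A := ⟨hcl ▸ isClosed_closure, hopenA A hA⟩
      have hAu : A = univ := this.eq_univ hAne
      exact hX (by rw [← hAu, ← hcl]; exact hc)
    obtain ⟨w, hw⟩ := hdiff
    have hwK : w ∈ K := key A hA hw
    have h1 : (closure A ∩ interior L).Nonempty := ⟨w, hw.1, hKL hwK⟩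
    have h2 : (closure A \ closure L).Nonempty := by
      obtain ⟨v, hv⟩ := not_subset.mp hAL
      exact ⟨v, subset_closure hv.1, by rw [hL.isClosed.closure_eq]; exact hv.2⟩
    obtain ⟨z, hz1, hz2⟩ := isPreconnected_inter_frontier_nonempty hclconn h1 h2
    refine ⟨z, ?_, hz2⟩
    by_cases hzA : z ∈ A
    · exact hzA
    · exfalso
      have hzK : z ∈ K := key A hA ⟨hz1, hzA⟩
      exact hz2.2 (hKL hzK)
  -- frontier L is compact and contained in Kᶜ
  have hfL : IsCompact (frontier L) :=
    hL.of_isClosed_subset isClosed_frontier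
      (frontier_subset_closure.trans hL.isClosed.closure_eq.subset)
  have hfLK : frontier L ⊆ Kᶜ := fun x hx hxK => hx.2 (hKL hxK)
  -- finitely many components cover frontier L
  obtain ⟨t, hts, htfin, hcov⟩ := hfL.elim_finite_subcover_image
    (fun x (hx : x ∈ frontier L) => hKc.connectedComponentIn (x := x))
    (fun x hx => mem_biUnion hx (mem_connectedComponentIn (hfLK hx)))
  -- the set of A ∈ 𝒜 not contained in L is finite
  set bad := {A ∈ 𝒜 | ¬ A ⊆ L} with hbad
  have hbadfin : bad.Finite := by
    refine (htfin.image (fun x => connectedComponentIn Kᶜ x)).subset ?_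
    rintro A ⟨hA, hAL⟩
    obtain ⟨z, hzA, hzf⟩ := hmeet A hA hAL
    obtain ⟨x, hxt, hzx⟩ := mem_iUnion₂.mp (hcov hzf)
    obtain ⟨⟨a, ha, rfl⟩, -⟩ := h𝒜 A hA
    refine ⟨x, hxt, ?_⟩
    show connectedComponentIn Kᶜ x = connectedComponentIn Kᶜ a
    rw [connectedComponentIn_eq hzx, connectedComponentIn_eq hzA]
  -- conclude
  set C := L ∪ ⋃ A ∈ bad, closure A with hC
  have hCcomp : IsCompact C :=
    hL.union (hbadfin.isCompact_biUnion (fun A hA => (h𝒜 A hA.1).2))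
  have hCclosed : IsClosed C :=
    hL.isClosed.union (hbadfin.isClosed_biUnion (fun A _ => isClosed_closure))
  have hsub : ⋃₀ 𝒜 ⊆ C := by
    rintro x ⟨A, hA, hxA⟩
    by_cases hAL : A ⊆ L
    · exact Or.inl (hAL hxA)
    · exact Or.inr (mem_biUnion ⟨hA, hAL⟩ (subset_closure hxA))
  exact hCcomp.of_isClosed_subset isClosed_closure (closure_minimal hsub hCclosed)
end

section
/- For every compact subset K ⊆ X, the set 𝓔(K,X) of ends of X relative to K is finite. -/
open Set Topology

/-- `E` is an end of `X` relative to the compact set `K`: a connected component of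
`X \ K` that is not relatively compact. -/
def IsRelEnd {X : Type*} [TopologicalSpace X] (K E : Set X) : Prop :=
  IsCCIn Kᶜ E ∧ ¬ IsCompact (closure E)

/-- The set `𝓔(K, X)` of ends of `X` relative to the compact set `K`. -/
def relEnds {X : Type*} [TopologicalSpace X] (K : Set X) : Set (Set X) :=
  {E | IsRelEnd K E}

/-- A preconnected set meeting both `L` and its complement meets the frontier of `L`. -/
lemma preconnected_inter_frontier {X : Type*} [TopologicalSpace X] {E L : Set X}
    (hE : IsPreconnected E) (h1 : (E ∩ L).Nonempty) (h2 : (E \ L).Nonempty) :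
    (E ∩ frontier L).Nonempty := by
  by_contra h
  rw [not_nonempty_iff_eq_empty] at h
  have hsub : E ⊆ interior L ∪ (closure L)ᶜ := by
    intro x hx
    have hxf : x ∉ frontier L := fun hf => by
      have : x ∈ E ∩ frontier L := ⟨hx, hf⟩
      simp [h] at this
    by_cases hc : x ∈ closure L
    · left
      rcases not_and_or.1 (fun hh : x ∈ closure L ∧ x ∉ interior L => hxf ⟨hh.1, hh.2⟩) with h' | h'
      · exact absurd hc h'
      · exact not_not.1 h'
    · right; exact hc
  have hu : (E ∩ interior L).Nonempty := by
    obtain ⟨x, hxE, hxL⟩ := h1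
    rcases hsub hxE with h' | h'
    · exact ⟨x, hxE, h'⟩
    · exact absurd (subset_closure hxL) h'
  have hv : (E ∩ (closure L)ᶜ).Nonempty := by
    obtain ⟨x, hxE, hxL⟩ := h2
    rcases hsub hxE with h' | h'
    · exact absurd (interior_subset h') hxL
    · exact ⟨x, hxE, h'⟩
  obtain ⟨x, hxE, hx1, hx2⟩ :=
    hE (interior L) (closure L)ᶜ isOpen_interior (isClosed_closure.isOpen_compl) hsub hu hv
  exact hx2 (subset_closure (interior_subset hx1))

/-- For every compact subset K of X, the set 𝓔(K, X) of ends of X relative to K is finite. -/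
theorem relEnds_finite {X : Type*} [TopologicalSpace X] [Nonempty X] [ConnectedSpace X]
    [LocallyCompactSpace X] [LocallyConnectedSpace X] [SigmaCompactSpace X] [T2Space X]
    (K : Set X) (hK : IsCompact K) :
    (relEnds K).Finite := by
  classical
  obtain ⟨x₀⟩ := ‹Nonempty X›
  obtain ⟨L, hLc, hsub⟩ := exists_compact_superset (hK.union (isCompact_singleton (x := x₀)))
  have hKint : K ⊆ interior L := (subset_union_left).trans hsub
  have hx₀ : x₀ ∈ interior L := hsub (by simp)
  set F := frontier L with hF
  have hFL : F ⊆ L := hLc.isClosed.frontier_subset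
  have hFc : IsCompact F := hLc.of_isClosed_subset isClosed_frontier hFL
  have hFK : F ⊆ Kᶜ := fun x hx => fun hxK => hx.2 (hKint hxK)
  have hKopen : IsOpen Kᶜ := hK.isClosed.isOpen_compl
  -- cover F by connected components of Kᶜ
  have hcover : F ⊆ ⋃ x ∈ F, connectedComponentIn Kᶜ x := fun x hx =>
    mem_biUnion hx (mem_connectedComponentIn (hFK hx))
  obtain ⟨t, htF, htfin, htcov⟩ := hFc.elim_finite_subcover_image
    (fun x _ => hKopen.connectedComponentIn) hcover
  apply Set.Finite.subset (htfin.image (fun x => connectedComponentIn Kᶜ x))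
  rintro E ⟨⟨x, hx, rfl⟩, hnc⟩
  set E := connectedComponentIn Kᶜ x with hE
  have hEK : E ⊆ Kᶜ := connectedComponentIn_subset _ _
  have hEpc : IsPreconnected E := isPreconnected_connectedComponentIn
  -- closure E \ E ⊆ K
  have hclE : closure E ∩ Kᶜ ⊆ E := by
    intro y ⟨hy1, hy2⟩
    have hins : IsPreconnected (insert y E) :=
      hEpc.subset_closure (subset_insert _ _) (insert_subset hy1 subset_closure)
    have : insert y E ⊆ E :=
      hins.subset_connectedComponentIn (mem_insert_iff.2 (Or.inr (mem_connectedComponentIn hx)))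
        (insert_subset hy2 hEK)
    exact this (mem_insert _ _)
  -- E meets interior L
  have hmeet : (E ∩ L).Nonempty := by
    by_cases hcl : (closure E \ E).Nonempty
    · obtain ⟨y, hy1, hy2⟩ := hcl
      have hyK : y ∈ K := by
        by_contra hyK
        exact hy2 (hclE ⟨hy1, hyK⟩)
      obtain ⟨z, hz1, hz2⟩ := mem_closure_iff.1 hy1 (interior L) isOpen_interior (hKint hyK)
      exact ⟨z, hz2, interior_subset hz1⟩
    · have hclosed : IsClosed E := by
        rw [not_nonempty_iff_eq_empty, diff_eq_empty] at hcl
        exact isClosed_of_closure_subset hcl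
      have : E = univ := IsClopen.eq_univ ⟨hclosed, hKopen.connectedComponentIn⟩
        ⟨x, mem_connectedComponentIn hx⟩
      exact ⟨x₀, this ▸ mem_univ x₀, interior_subset hx₀⟩
  have hdiff : (E \ L).Nonempty := by
    by_contra h
    rw [not_nonempty_iff_eq_empty, diff_eq_empty] at h
    exact hnc (hLc.of_isClosed_subset isClosed_closure (closure_minimal h hLc.isClosed))
  obtain ⟨w, hwE, hwF⟩ := preconnected_inter_frontier hEpc hmeet hdiff
  obtain ⟨u, hu, hwu⟩ := mem_iUnion₂.1 (htcov hwF)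
  refine ⟨u, hu, ?_⟩
  have h1 : connectedComponentIn Kᶜ u = connectedComponentIn Kᶜ w := connectedComponentIn_eq hwu
  have h2 : E = connectedComponentIn Kᶜ w := connectedComponentIn_eq hwE
  show connectedComponentIn Kᶜ u = E
  rw [h1, h2]
end

section
/- Let K ⊆ H be compact subsets of X. Then every end E of X relative to K contains at least one end of X relative to H. Consequently, the natural map 𝓔(H,X) → 𝓔(K,X), sending an end relative to H to the unique connected component of X ∖ K containing it, is surjective. -/
open Set Topology

/-- In a locally connected space, the closure of a connected component of an open set
is contained in the component together with the complement of the set. -/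
lemma closure_ccIn_subset {X : Type*} [TopologicalSpace X] [LocallyConnectedSpace X]
    {S : Set X} (hS : IsOpen S) (x : X) :
    closure (connectedComponentIn S x) ⊆ connectedComponentIn S x ∪ Sᶜ := by
  intro y hy
  by_cases hyS : y ∈ S
  · left
    have hnhds : connectedComponentIn S y ∈ 𝓝 y :=
      connectedComponentIn_mem_nhds (hS.mem_nhds hyS)
    obtain ⟨z, hz1, hz2⟩ := mem_closure_iff_nhds.mp hy _ hnhds
    have h1 : connectedComponentIn S y = connectedComponentIn S z := connectedComponentIn_eq hz1
    have h2 : connectedComponentIn S x = connectedComponentIn S z := connectedComponentIn_eq hz2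
    rw [h2, ← h1]
    exact mem_connectedComponentIn hyS
  · exact Or.inr hyS

/-- For compact K ⊆ H, every end of X relative to K contains an end of X relative to H;
hence the natural map 𝓔(H,X) → 𝓔(K,X) is surjective. -/
theorem relEnd_contains_relEnd {X : Type*} [TopologicalSpace X] [Nonempty X] [ConnectedSpace X]
    [LocallyCompactSpace X] [LocallyConnectedSpace X] [SigmaCompactSpace X] [T2Space X]
    (K H : Set X) (hK : IsCompact K) (hH : IsCompact H) (hKH : K ⊆ H)
    (E : Set X) (hE : E ∈ relEnds K) :
    ∃ F ∈ relEnds H, F ⊆ E := by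
  classical
  obtain ⟨⟨x, hxK, hEeq⟩, hEnc⟩ := hE
  by_cases hHe : H = ∅
  · -- then K = ∅ as well, and E itself works
    have hKe : K = ∅ := eq_empty_of_subset_empty (hHe ▸ hKH)
    refine ⟨E, ⟨⟨x, ?_, ?_⟩, hEnc⟩, subset_rfl⟩
    · simp [hHe]
    · rw [hEeq, hKe, hHe]
  -- main case: H ≠ ∅
  have hHo : IsOpen Hᶜ := hH.isClosed.isOpen_compl
  have hKo : IsOpen Kᶜ := hK.isClosed.isOpen_compl
  obtain ⟨L, hL, hHL⟩ := exists_compact_superset hH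
  set B : Set X := frontier L with hBdef
  have hLcl : IsClosed L := hL.isClosed
  have hBL : B ⊆ L := by
    rw [hBdef, hLcl.frontier_eq]
    exact diff_subset
  have hB : IsCompact B := hL.of_isClosed_subset isClosed_frontier hBL
  have hBH : B ⊆ Hᶜ := fun y hy hyH =>
    hy.2 (interior_mono (subset_refl L) (hHL hyH))
  set U : X → Set X := fun y => connectedComponentIn Hᶜ y with hUdef
  have hUnhds : ∀ y ∈ B, U y ∈ 𝓝 y := fun y hy =>
    connectedComponentIn_mem_nhds (hHo.mem_nhds (hBH hy))
  obtain ⟨t, htB, htcov⟩ := hB.elim_nhds_subcover U hUnhds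
  -- By contradiction: assume no end relative to H is contained in E.
  by_contra hcon
  push_neg at hcon
  -- every component of Hᶜ contained in E has compact closure
  have hcomp : ∀ z ∈ Hᶜ, U z ⊆ E → IsCompact (closure (U z)) := by
    intro z hz hzE
    by_contra hnc
    exact hcon (U z) ⟨⟨z, hz, rfl⟩, hnc⟩ hzE
  -- components of Hᶜ through points of E are contained in E
  have hsubE : ∀ z ∈ E, U z ⊆ E := by
    intro z hzE
    have hzK : z ∈ Kᶜ := by rw [hEeq] at hzE; exact connectedComponentIn_subset _ _ hzE
    have h1 : U z ⊆ connectedComponentIn Kᶜ z :=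
      connectedComponentIn_mono z (compl_subset_compl.mpr hKH)
    have hzE' : z ∈ connectedComponentIn Kᶜ x := hEeq ▸ hzE
    have h2 : connectedComponentIn Kᶜ x = connectedComponentIn Kᶜ z :=
      connectedComponentIn_eq hzE'
    rw [hEeq]
    exact h1.trans h2.symm.subset
  -- key claim: E ∩ Hᶜ ⊆ L ∪ ⋃ y ∈ t', U y   where t' filters components inside E
  set t' : Finset X := t.filter (fun y => U y ⊆ E) with ht'def
  have hclaim : E ∩ Hᶜ ⊆ L ∪ ⋃ y ∈ t', U y := by
    rintro z ⟨hzE, hzH⟩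
    by_cases hFL : U z ⊆ L
    · exact Or.inl (hFL (mem_connectedComponentIn hzH))
    -- U z is not contained in L; show it meets the frontier B
    have hmeet : (U z ∩ B).Nonempty := by
      by_contra hno
      rw [not_nonempty_iff_eq_empty] at hno
      have hdis : U z ⊆ interior L ∪ Lᶜ := by
        intro w hw
        by_cases hwL : w ∈ L
        · left
          by_contra hwi
          have hmem : w ∈ U z ∩ B := ⟨hw, by
            rw [hBdef, hLcl.frontier_eq]; exact ⟨hwL, hwi⟩⟩
          rw [hno] at hmem
          exact hmem
        · exact Or.inr hwL
      have hpc : IsPreconnected (U z) := isPreconnected_connectedComponentIn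
      have hne : (U z).Nonempty := ⟨z, mem_connectedComponentIn hzH⟩
      -- U z connected inside two disjoint opens
      have : U z ⊆ interior L ∨ U z ⊆ Lᶜ := by
        have hsep := hpc.subset_or_subset isOpen_interior hLcl.isOpen_compl
          (by
            rw [disjoint_iff_inter_eq_empty]
            ext w; simp only [mem_inter_iff, mem_empty_iff_false, iff_false]
            rintro ⟨hw1, hw2⟩; exact hw2 (interior_subset hw1))
          hdis
        exact hsep
      rcases this with h | h
      · exact hFL (h.trans interior_subset)
      -- U z ⊆ Lᶜ : then U z is clopen, so U z = univ, contradicting H ≠ ∅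
      · have hclosed : closure (U z) ⊆ U z := by
          intro w hw
          rcases closure_ccIn_subset hHo z hw with hw' | hw'
          · exact hw'
          -- w ∈ H ⊆ interior L, but w ∈ closure (U z) ⊆ closure Lᶜ ⊆ (interior L)ᶜ
          · exfalso
            have hwL : w ∈ closure Lᶜ := closure_mono h hw
            have : w ∉ interior L := by
              intro hwi
              rw [closure_compl] at hwL
              exact hwL hwi
            exact this (hHL (not_not.mp (by simpa using hw')))
        have hclopen : IsClopen (U z) :=
          ⟨isClosed_of_closure_subset hclosed, hHo.connectedComponentIn⟩
        rcases isClopen_iff.mp hclopen with h0 | h0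
        · exact absurd h0 (nonempty_iff_ne_empty.mp hne)
        · -- U z = univ ⊆ Hᶜ, so H = ∅
          have hsub : H ⊆ Hᶜ := fun w _ =>
            connectedComponentIn_subset _ _ (h0.ge (mem_univ w))
          exact hHe (eq_empty_iff_forall_notMem.mpr (fun w hw => (hsub hw) hw))
    -- U z meets B, hence equals some U y with y ∈ t
    obtain ⟨w, hwU, hwB⟩ := hmeet
    have hwcov := htcov hwB
    simp only [Finset.mem_coe, mem_iUnion, exists_prop] at hwcov
    obtain ⟨y, hyt, hwy⟩ := hwcov
    have heq : U y = U z := by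
      have h1 : U y = connectedComponentIn Hᶜ w := connectedComponentIn_eq hwy
      have h2 : U z = connectedComponentIn Hᶜ w := connectedComponentIn_eq hwU
      rw [h1, ← h2]
    have hyE : U y ⊆ E := heq ▸ hsubE z hzE
    right
    refine mem_iUnion₂.mpr ⟨y, ?_, ?_⟩
    · rw [ht'def]; exact Finset.mem_filter.mpr ⟨hyt, hyE⟩
    · rw [heq]; exact mem_connectedComponentIn hzH
  -- assemble the compact set containing closure E
  set M : Set X := H ∪ (L ∪ ⋃ y ∈ t', closure (U y)) with hMdef
  have hMcomp : IsCompact M := by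
    refine hH.union (hL.union ?_)
    refine t'.finite_toSet.isCompact_biUnion ?_
    intro y hyt'
    rw [ht'def] at hyt'
    simp only [Finset.coe_filter, mem_setOf_eq] at hyt'
    obtain ⟨hyt, hyE⟩ := hyt'
    exact hcomp y (hBH (htB y hyt)) hyE
  have hEM : closure E ⊆ M := by
    have h1 : closure E ⊆ E ∪ K := by
      rw [hEeq]
      simpa using closure_ccIn_subset hKo x
    have h2 : E ∪ K ⊆ H ∪ (E ∩ Hᶜ) := by
      rintro w (hw | hw)
      · by_cases hwH : w ∈ H
        · exact Or.inl hwH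
        · exact Or.inr ⟨hw, hwH⟩
      · exact Or.inl (hKH hw)
    have h3 : H ∪ (E ∩ Hᶜ) ⊆ M := by
      rintro w (hw | hw)
      · exact Or.inl hw
      · rcases hclaim hw with h | h
        · exact Or.inr (Or.inl h)
        · refine Or.inr (Or.inr ?_)
          obtain ⟨y, hy1, hy2⟩ := mem_iUnion₂.mp h
          exact mem_iUnion₂.mpr ⟨y, hy1, subset_closure hy2⟩
    exact h1.trans (h2.trans h3)
  exact hEnc (hMcomp.of_isClosed_subset isClosed_closure hEM)
end

section
/- Let (K_i)_{i∈ℕ} be an exhaustion of X by compact subsets. Then the map sending each end 𝖤 ∈ 𝓔(X) to the sequence (𝖤(K_i))_{i∈ℕ} is a bijection from 𝓔(X) onto the set of all sequences (U_i)_{i∈ℕ} such that each U_i is a connected component of X ∖ K_i and U_{i+1} ⊆ U_i for all i ∈ ℕ. -/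
open Set Topology

/-- The set `𝓔(X)` of ends of `X`: functions assigning to each compact subset `K` of `X`
a connected component of `X \ K`, such that `𝖤(H) ⊆ 𝖤(K)` whenever `K ⊆ H`. -/
def Ends (X : Type*) [TopologicalSpace X] : Set ({K : Set X // IsCompact K} → Set X) :=
  {E | (∀ K : {K : Set X // IsCompact K}, IsCCIn (K : Set X)ᶜ (E K)) ∧
       ∀ K H : {K : Set X // IsCompact K}, (K : Set X) ⊆ (H : Set X) → E H ⊆ E K}

/-- Given an exhaustion of X by compact subsets, the map 𝖤 ↦ (𝖤(Kᵢ))ᵢ is a bijection from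
the set of ends of X onto the set of nested sequences of connected components of X ∖ Kᵢ. -/
theorem ends_bijection_exhaustion {X : Type*} [TopologicalSpace X] [Nonempty X] [ConnectedSpace X]
    [LocallyCompactSpace X] [LocallyConnectedSpace X] [SigmaCompactSpace X] [T2Space X]
    (K : ℕ → Set X) (hKc : ∀ i, IsCompact (K i))
    (hKint : ∀ i, K i ⊆ interior (K (i + 1))) (hKcov : ⋃ i, K i = Set.univ) :
    Set.BijOn
      (fun (E : {K : Set X // IsCompact K} → Set X) => fun i : ℕ => E ⟨K i, hKc i⟩)
      (Ends X)
      {U : ℕ → Set X | (∀ i, IsCCIn (K i)ᶜ (U i)) ∧ ∀ i, U (i + 1) ⊆ U i} := by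
  classical
  have Kmono : ∀ {n m : ℕ}, n ≤ m → K n ⊆ K m := by
    intro n m h
    induction h with
    | refl => exact subset_rfl
    | step h ih => exact ih.trans ((hKint _).trans interior_subset)
  have hCsub : ∀ {C : Set X}, IsCompact C → ∃ n, C ⊆ K n := by
    intro C hC
    have hcov : C ⊆ ⋃ n, interior (K n) := by
      intro x _
      have hx : x ∈ ⋃ i, K i := by rw [hKcov]; trivial
      obtain ⟨i, hi⟩ := mem_iUnion.1 hx
      exact mem_iUnion.2 ⟨i + 1, hKint i hi⟩
    obtain ⟨t, ht⟩ := hC.elim_finite_subcover (fun n => interior (K n))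
      (fun n => isOpen_interior) hcov
    refine ⟨t.sup id, ht.trans ?_⟩
    intro x hx
    obtain ⟨i, hit, hxi⟩ := by simpa using hx
    exact Kmono (Finset.le_sup (f := id) hit) (interior_subset hxi)
  have comp_eq : ∀ {F s : Set X} {x y : X}, IsPreconnected s → s ⊆ F → x ∈ s → y ∈ s →
      connectedComponentIn F x = connectedComponentIn F y := by
    intro F s x y hs hsF hx hy
    exact connectedComponentIn_eq (hs.subset_connectedComponentIn hx hsF hy)
  have cc_ne : ∀ {S E : Set X}, IsCCIn S E → E.Nonempty := by
    rintro S E ⟨x, hx, rfl⟩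
    exact ⟨x, mem_connectedComponentIn hx⟩
  refine ⟨?_, ?_, ?_⟩
  · rintro E ⟨hE1, hE2⟩
    exact ⟨fun i => hE1 ⟨K i, hKc i⟩,
      fun i => hE2 ⟨K i, hKc i⟩ ⟨K (i + 1), hKc (i + 1)⟩ ((hKint i).trans interior_subset)⟩
  · rintro E ⟨hE1, hE2⟩ E' ⟨hE1', hE2'⟩ hEq
    funext C
    obtain ⟨C, hC⟩ := C
    obtain ⟨n, hn⟩ := hCsub hC
    obtain ⟨w, hw⟩ := cc_ne (hE1 ⟨K n, hKc n⟩)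
    have hw' : w ∈ E' ⟨K n, hKc n⟩ := by
      have := congrFun hEq n
      simp only at this
      rwa [this] at hw
    have h1 : w ∈ E ⟨C, hC⟩ := hE2 ⟨C, hC⟩ ⟨K n, hKc n⟩ hn hw
    have h1' : w ∈ E' ⟨C, hC⟩ := hE2' ⟨C, hC⟩ ⟨K n, hKc n⟩ hn hw'
    obtain ⟨a, ha, hEa⟩ := hE1 ⟨C, hC⟩
    obtain ⟨a', ha', hEa'⟩ := hE1' ⟨C, hC⟩
    rw [hEa] at h1
    rw [hEa'] at h1'
    rw [hEa, hEa']
    exact (connectedComponentIn_eq h1).trans (connectedComponentIn_eq h1').symm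
  · rintro U ⟨hU1, hU2⟩
    have Uanti : ∀ {n m : ℕ}, n ≤ m → U m ⊆ U n := by
      intro n m h
      induction h with
      | refl => exact subset_rfl
      | step h ih => exact (hU2 _).trans ih
    have Une : ∀ i, (U i).Nonempty := fun i => cc_ne (hU1 i)
    have Upre : ∀ i, IsPreconnected (U i) := by
      intro i; obtain ⟨x, hx, h⟩ := hU1 i; rw [h]; exact isPreconnected_connectedComponentIn
    have Usub : ∀ i, U i ⊆ (K i)ᶜ := by
      intro i; obtain ⟨x, hx, h⟩ := hU1 i; rw [h]; exact connectedComponentIn_subset _ _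
    set n : {K : Set X // IsCompact K} → ℕ := fun C => (hCsub C.2).choose with hn
    set pt : {K : Set X // IsCompact K} → X := fun C => (Une (n C)).choose with hpt
    have hptU : ∀ C, pt C ∈ U (n C) := fun C => (Une (n C)).choose_spec
    have hnK : ∀ C : {K : Set X // IsCompact K}, (C : Set X) ⊆ K (n C) :=
      fun C => (hCsub C.2).choose_spec
    set E : {K : Set X // IsCompact K} → Set X :=
      fun C => connectedComponentIn ((C : Set X))ᶜ (pt C) with hE
    have key : ∀ (C : {K : Set X // IsCompact K}) (m : ℕ) (y : X),
        (C : Set X) ⊆ K m → y ∈ U m → E C = connectedComponentIn ((C : Set X))ᶜ y := by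
      intro C m y hCm hy
      obtain ⟨z, hz⟩ := Une (max (n C) m)
      have hz1 : z ∈ U (n C) := Uanti (le_max_left _ _) hz
      have hz2 : z ∈ U m := Uanti (le_max_right _ _) hz
      have hsub1 : U (n C) ⊆ ((C : Set X))ᶜ := (Usub _).trans (compl_subset_compl.2 (hnK C))
      have hsub2 : U m ⊆ ((C : Set X))ᶜ := (Usub _).trans (compl_subset_compl.2 hCm)
      calc E C = connectedComponentIn ((C : Set X))ᶜ z :=
            comp_eq (Upre _) hsub1 (hptU C) hz1
        _ = connectedComponentIn ((C : Set X))ᶜ y := comp_eq (Upre _) hsub2 hz2 hy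
    have hptmem : ∀ C : {K : Set X // IsCompact K}, pt C ∈ ((C : Set X))ᶜ :=
      fun C => ((Usub _).trans (compl_subset_compl.2 (hnK C))) (hptU C)
    refine ⟨E, ⟨fun C => ⟨pt C, hptmem C, rfl⟩, ?_⟩, ?_⟩
    · intro C H hCH
      have hEC : E C = connectedComponentIn ((C : Set X))ᶜ (pt H) :=
        key C (n H) (pt H) (hCH.trans (hnK H)) (hptU H)
      rw [hEC]
      exact isPreconnected_connectedComponentIn.subset_connectedComponentIn
        (mem_connectedComponentIn (hptmem H))
        ((connectedComponentIn_subset _ _).trans (compl_subset_compl.2 hCH))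
    · funext i
      obtain ⟨x₀, hx₀, hUi⟩ := hU1 i
      obtain ⟨y, hy⟩ := Une i
      have h1 : E ⟨K i, hKc i⟩ = connectedComponentIn (K i)ᶜ y :=
        key ⟨K i, hKc i⟩ i y subset_rfl hy
      have h2 : y ∈ connectedComponentIn (K i)ᶜ x₀ := by rw [← hUi]; exact hy
      simp only
      rw [h1, hUi]
      exact (connectedComponentIn_eq h2).symm
end

section
/- Let K ⊆ X be a compact subset and let E be an end of X relative to K. If for every compact subset H ⊆ X with K ⊆ H there exists exactly one end of X relative to H that is contained in E, then there exists exactly one end 𝖤 ∈ 𝓔(X) such that 𝖤(K) = E. -/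
open Set Topology

/-- If for every compact H ⊇ K there is exactly one end relative to H contained in E, then
there is exactly one end En of X with En(K) = E. -/
theorem relEnd_extends_to_unique_end {X : Type*} [TopologicalSpace X] [Nonempty X] [ConnectedSpace X]
    [LocallyCompactSpace X] [LocallyConnectedSpace X] [SigmaCompactSpace X] [T2Space X]
    (K : Set X) (hK : IsCompact K) (E : Set X) (hE : E ∈ relEnds K)
    (huniq : ∀ H : Set X, IsCompact H → K ⊆ H → ∃! F : Set X, F ∈ relEnds H ∧ F ⊆ E) :
    ∃! En : {K : Set X // IsCompact K} → Set X, En ∈ Ends X ∧ En ⟨K, hK⟩ = E := by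
  classical
  -- E as a connected component of Kᶜ
  obtain ⟨⟨z, hzK, hEz⟩, hEnc⟩ := hE
  have hEcomp : ∀ x ∈ E, connectedComponentIn Kᶜ x = E := by
    intro x hx
    rw [hEz] at hx ⊢
    exact (connectedComponentIn_eq hx).symm
  -- the unique relative end of K ∪ L inside E, for each compact L
  have key : ∀ L : {K : Set X // IsCompact K}, ∃ F,
      (F ∈ relEnds (K ∪ L) ∧ F ⊆ E) ∧ ∀ G, G ∈ relEnds (K ∪ L) ∧ G ⊆ E → G = F := by
    intro L
    obtain ⟨F, hF, hFu⟩ := huniq (K ∪ L) (hK.union L.2) subset_union_left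
    exact ⟨F, hF, hFu⟩
  choose F hF hFuniq using key
  have hFcc : ∀ L, ∀ x ∈ F L, F L = connectedComponentIn (K ∪ (L : Set X))ᶜ x := by
    intro L x hx
    obtain ⟨y, hy, hEq⟩ := (hF L).1.1
    rw [hEq] at hx ⊢
    exact connectedComponentIn_eq hx
  have hFne : ∀ L, (F L).Nonempty := by
    intro L
    obtain ⟨y, hy, hEq⟩ := (hF L).1.1
    exact ⟨y, hEq ▸ mem_connectedComponentIn hy⟩
  choose pt hpt using hFne
  have hFconn : ∀ L, IsPreconnected (F L) := by
    intro L
    rw [hFcc L (pt L) (hpt L)]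
    exact isPreconnected_connectedComponentIn
  have hFsubc : ∀ L, F L ⊆ (K ∪ (L : Set X))ᶜ := by
    intro L
    rw [hFcc L (pt L) (hpt L)]
    exact connectedComponentIn_subset _ _
  -- the candidate end
  set En : {K : Set X // IsCompact K} → Set X :=
    fun L => connectedComponentIn (L : Set X)ᶜ (pt L) with hEn
  have hA : ∀ L : {K : Set X // IsCompact K}, ∀ x ∈ F L,
      connectedComponentIn (L : Set X)ᶜ x = En L := by
    intro L x hx
    have hsub : F L ⊆ (L : Set X)ᶜ :=
      (hFsubc L).trans (compl_subset_compl.2 subset_union_right)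
    have : F L ⊆ connectedComponentIn (L : Set X)ᶜ (pt L) :=
      (hFconn L).subset_connectedComponentIn (hpt L) hsub
    exact (connectedComponentIn_eq (this hx)).symm
  have hFE : ∀ L, F L ⊆ E := fun L => (hF L).2
  -- monotonicity of F
  have hFmono : ∀ L M : {K : Set X // IsCompact K}, (L : Set X) ⊆ M → F M ⊆ F L := by
    intro L M hLM
    have hsub : F M ⊆ (K ∪ (L : Set X))ᶜ :=
      (hFsubc M).trans (compl_subset_compl.2 (union_subset_union_right K hLM))
    set G := connectedComponentIn (K ∪ (L : Set X))ᶜ (pt M) with hG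
    have hFG : F M ⊆ G :=
      (hFconn M).subset_connectedComponentIn (hpt M) hsub
    have hGnc : ¬ IsCompact (closure G) := by
      intro hc
      exact (hF M).1.2 (hc.of_isClosed_subset isClosed_closure (closure_mono hFG))
    have hGE : G ⊆ E := by
      have hGsub : G ⊆ Kᶜ :=
        (connectedComponentIn_subset _ _).trans (compl_subset_compl.2 subset_union_left)
      have hptE : pt M ∈ E := hFE M (hpt M)
      have : G ⊆ connectedComponentIn Kᶜ (pt M) :=
        isPreconnected_connectedComponentIn.subset_connectedComponentIn
          (mem_connectedComponentIn (hsub (hpt M))) hGsub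
      rw [hEcomp (pt M) hptE] at this
      exact this
    have : G = F L := hFuniq L G ⟨⟨⟨pt M, hsub (hpt M), rfl⟩, hGnc⟩, hGE⟩
    exact this ▸ hFG
  -- En is an end
  have hEnEnds : En ∈ Ends X := by
    constructor
    · intro L
      exact ⟨pt L, (hFsubc L).trans (compl_subset_compl.2 subset_union_right) (hpt L), rfl⟩
    · intro L M hLM
      have h1 : En M ⊆ connectedComponentIn (L : Set X)ᶜ (pt M) :=
        connectedComponentIn_mono (pt M) (compl_subset_compl.2 hLM)
      have h2 : connectedComponentIn (L : Set X)ᶜ (pt M) = En L :=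
        hA L (pt M) (hFmono L M hLM (hpt M))
      exact h2 ▸ h1
  -- F at K is E, hence En at K is E
  have hFK : F ⟨K, hK⟩ = E := by
    have hEmem : E ∈ relEnds (K ∪ K) := by
      rw [union_self]; exact ⟨⟨z, hzK, hEz⟩, hEnc⟩
    exact (hFuniq ⟨K, hK⟩ E ⟨hEmem, subset_rfl⟩).symm
  have hEnK : En ⟨K, hK⟩ = E := by
    have h1 := hA ⟨K, hK⟩ (pt ⟨K, hK⟩) (hpt ⟨K, hK⟩)
    have h2 : pt ⟨K, hK⟩ ∈ E := hFK ▸ hpt ⟨K, hK⟩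
    rw [← h1]
    exact hEcomp _ h2
  refine ⟨En, ⟨hEnEnds, hEnK⟩, ?_⟩
  -- uniqueness
  rintro En' ⟨⟨hEn'cc, hEn'mono⟩, hEn'K⟩
  -- values of ends are nonempty
  have hne : ∀ L, (En' L).Nonempty := by
    intro L
    obtain ⟨y, hy, hEq⟩ := hEn'cc L
    exact ⟨y, hEq ▸ mem_connectedComponentIn hy⟩
  -- values of ends are not relatively compact
  have hnc : ∀ L, ¬ IsCompact (closure (En' L)) := by
    intro L hc
    set M : {K : Set X // IsCompact K} := ⟨(L : Set X) ∪ closure (En' L), L.2.union hc⟩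
    obtain ⟨y, hy⟩ := hne M
    have h1 : y ∈ ((L : Set X) ∪ closure (En' L))ᶜ := by
      obtain ⟨w, hw, hEq⟩ := hEn'cc M
      exact connectedComponentIn_subset _ _ (hEq ▸ hy)
    have h2 : y ∈ closure (En' L) :=
      subset_closure (hEn'mono L M subset_union_left hy)
    exact h1 (Or.inr h2)
  funext L
  set H : {K : Set X // IsCompact K} := ⟨K ∪ (L : Set X), hK.union L.2⟩
  have hH1 : En' H ∈ relEnds (K ∪ (L : Set X)) := ⟨hEn'cc H, hnc H⟩
  have hH2 : En' H ⊆ E := hEn'K ▸ hEn'mono ⟨K, hK⟩ H subset_union_left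
  have hHF : En' H = F L := hFuniq L (En' H) ⟨hH1, hH2⟩
  have hptL : pt L ∈ En' L :=
    hEn'mono L H subset_union_right (hHF ▸ hpt L)
  obtain ⟨y, hy, hEq⟩ := hEn'cc L
  rw [hEq]
  rw [hEq] at hptL
  exact (connectedComponentIn_eq hptL).trans (hA L (pt L) (hpt L))
end

section
/- If the function K ↦ n(K) is bounded on the compact subsets of X, then it attains its supremum at some compact subset K₀ ⊆ X, and for every such K₀ and every compact subset H ⊆ X with K₀ ⊆ H one has n(H) = n(K₀). -/
open Set Topology

section Aux

variable {X : Type*} [TopologicalSpace X]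

/-- A preconnected set meeting both `t` and `tᶜ` meets the frontier of `t`. -/
lemma aux_preconn_frontier {s t : Set X} (hs : IsPreconnected s)
    (h1 : (s ∩ t).Nonempty) (h2 : (s \ t).Nonempty) : (s ∩ frontier t).Nonempty := by
  by_contra hfr
  rw [Set.not_nonempty_iff_eq_empty] at hfr
  have hsub : s ⊆ interior t ∪ interior tᶜ := by
    intro x hx
    have hxfr : x ∉ frontier t := fun h => by
      have : x ∈ s ∩ frontier t := ⟨hx, h⟩
      simp [hfr] at this
    by_cases hxt : x ∈ closure t
    · left
      rcases (Set.mem_union _ _ _).1 (by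
        have : closure t = interior t ∪ frontier t := by
          rw [frontier, Set.union_diff_self, Set.union_eq_self_of_subset_left
            interior_subset_closure]
        rw [this] at hxt; exact hxt) with h | h
      · exact h
      · exact absurd h hxfr
    · right
      rw [interior_compl]
      exact hxt
  have h1' : (s ∩ interior t).Nonempty := by
    obtain ⟨x, hxs, hxt⟩ := h1
    rcases hsub hxs with h | h
    · exact ⟨x, hxs, h⟩
    · exact absurd (interior_subset h) (by simp [hxt])
  have h2' : (s ∩ interior tᶜ).Nonempty := by
    obtain ⟨x, hxs, hxt⟩ := h2
    rcases hsub hxs with h | h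
    · exact absurd (interior_subset h) hxt
    · exact ⟨x, hxs, h⟩
  obtain ⟨x, hx⟩ := hs (interior t) (interior tᶜ) isOpen_interior isOpen_interior hsub h1' h2'
  exact absurd (⟨interior_subset hx.2.1, interior_subset hx.2.2⟩ : x ∈ t ∩ tᶜ) (by simp)

/-- In a locally connected space, the part of the closure of a connected component of an
open set `S` lying inside `S` is in the component. -/
lemma aux_closure_ccIn [LocallyConnectedSpace X] {S : Set X} (hS : IsOpen S) {x : X} :
    closure (connectedComponentIn S x) ∩ S ⊆ connectedComponentIn S x := by
  rintro z ⟨hzc, hzS⟩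
  have hopen : IsOpen (connectedComponentIn S z) := hS.connectedComponentIn
  have hmem : z ∈ connectedComponentIn S z := mem_connectedComponentIn hzS
  obtain ⟨w, hw1, hw2⟩ := mem_closure_iff.1 hzc _ hopen hmem
  have h1 : connectedComponentIn S z = connectedComponentIn S w := connectedComponentIn_eq hw1
  have h2 : connectedComponentIn S x = connectedComponentIn S w := connectedComponentIn_eq hw2
  rw [h1, ← h2] at hmem
  exact hmem

lemma aux_end_eq_of_mem {S E : Set X} (hE : IsCCIn S E) {z : X} (hz : z ∈ E) :
    E = connectedComponentIn S z := by
  obtain ⟨x, hx, rfl⟩ := hE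
  exact connectedComponentIn_eq hz

lemma aux_end_nonempty {S E : Set X} (hE : IsCCIn S E) : E.Nonempty := by
  obtain ⟨x, hx, rfl⟩ := hE
  exact ⟨x, mem_connectedComponentIn hx⟩

variable [ConnectedSpace X] [LocallyCompactSpace X] [LocallyConnectedSpace X] [T2Space X]

/-- Every connected component of the complement of a nonempty compact set has closure
meeting the set. -/
lemma aux_closure_meets {H C : Set X} (hH : IsCompact H) (hne : H.Nonempty)
    (hC : IsCCIn Hᶜ C) : (closure C ∩ H).Nonempty := by
  by_contra hcl
  rw [Set.not_nonempty_iff_eq_empty] at hcl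
  have hHc : IsOpen Hᶜ := hH.isClosed.isOpen_compl
  obtain ⟨x, hx, rfl⟩ := hC
  have hsub : closure (connectedComponentIn Hᶜ x) ⊆ connectedComponentIn Hᶜ x := by
    intro z hz
    have hzH : z ∈ Hᶜ := by
      intro hzH
      have : z ∈ closure (connectedComponentIn Hᶜ x) ∩ H := ⟨hz, hzH⟩
      simp [hcl] at this
    exact aux_closure_ccIn hHc ⟨hz, hzH⟩
  have hclopen : IsClopen (connectedComponentIn Hᶜ x) :=
    ⟨closure_subset_iff_isClosed.1 hsub, hHc.connectedComponentIn⟩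
  have huniv := hclopen.eq_univ ⟨x, mem_connectedComponentIn hx⟩
  obtain ⟨y, hy⟩ := hne
  have : y ∈ Hᶜ := connectedComponentIn_subset _ _ (huniv ▸ Set.mem_univ y)
  exact this hy

/-- Key finiteness: there is a compact `L ⊇ H` and a finite collection `𝒮` of components of
`Hᶜ` such that every component of `Hᶜ` is contained in `L` or belongs to `𝒮`. -/
lemma aux_big_components {H : Set X} (hH : IsCompact H) (hne : H.Nonempty) :
    ∃ L : Set X, IsCompact L ∧ H ⊆ L ∧ ∃ 𝒮 : Set (Set X), 𝒮.Finite ∧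
      (∀ C ∈ 𝒮, IsCCIn Hᶜ C) ∧ ∀ C, IsCCIn Hᶜ C → C ⊆ L ∨ C ∈ 𝒮 := by
  obtain ⟨L, hL, hHL⟩ := exists_compact_superset hH
  have hHL' : H ⊆ L := hHL.trans interior_subset
  have hHc : IsOpen Hᶜ := hH.isClosed.isOpen_compl
  have hfrH : frontier L ⊆ Hᶜ := by
    intro z hz hzH
    exact hz.2 (hHL hzH)
  have hfrc : IsCompact (frontier L) :=
    hL.of_isClosed_subset isClosed_frontier
      (frontier_subset_closure.trans hL.isClosed.closure_subset)
  -- cover the frontier by components of Hᶜ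
  have hcov : frontier L ⊆ ⋃ i : frontier L, connectedComponentIn Hᶜ i.1 := by
    intro y hy
    exact Set.mem_iUnion.2 ⟨⟨y, hy⟩, mem_connectedComponentIn (hfrH hy)⟩
  obtain ⟨t, ht⟩ := hfrc.elim_finite_subcover (fun i : frontier L => connectedComponentIn Hᶜ i.1)
    (fun i => hHc.connectedComponentIn) hcov
  refine ⟨L, hL, hHL', (fun i : frontier L => connectedComponentIn Hᶜ i.1) '' t,
    (t.finite_toSet.image _), ?_, ?_⟩
  · rintro C ⟨i, hi, rfl⟩
    exact ⟨i.1, hfrH i.2, rfl⟩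
  · intro C hC
    by_cases hCL : C ⊆ L
    · exact Or.inl hCL
    right
    obtain ⟨x, hx, rfl⟩ := hC
    have hpre : IsPreconnected (connectedComponentIn Hᶜ x) := isPreconnected_connectedComponentIn
    -- the component meets L
    obtain ⟨z, hz1, hz2⟩ := aux_closure_meets hH hne ⟨x, hx, rfl⟩
    have hint : (connectedComponentIn Hᶜ x ∩ interior L).Nonempty := by
      obtain ⟨w, hw1, hw2⟩ := mem_closure_iff.1 hz1 _ isOpen_interior (hHL hz2)
      exact ⟨w, hw2, hw1⟩
    have h1 : (connectedComponentIn Hᶜ x ∩ L).Nonempty :=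
      hint.imp fun w hw => ⟨hw.1, interior_subset hw.2⟩
    have h2 : (connectedComponentIn Hᶜ x \ L).Nonempty := by
      rw [Set.not_subset] at hCL
      obtain ⟨w, hw1, hw2⟩ := hCL
      exact ⟨w, hw1, hw2⟩
    obtain ⟨y, hy1, hy2⟩ := aux_preconn_frontier hpre h1 h2
    have hyE : connectedComponentIn Hᶜ x = connectedComponentIn Hᶜ y := connectedComponentIn_eq hy1
    obtain ⟨i, hi, hiy⟩ := Set.mem_iUnion₂.1 (ht hy2)
    exact ⟨i, hi, (connectedComponentIn_eq hiy).trans hyE.symm⟩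

lemma aux_relEnds_finite {H : Set X} (hH : IsCompact H) : (relEnds H).Finite := by
  rcases Set.eq_empty_or_nonempty H with rfl | hne
  · apply Set.Finite.subset (Set.finite_singleton (Set.univ : Set X))
    rintro E ⟨⟨x, _, rfl⟩, _⟩
    simp only [Set.mem_singleton_iff, Set.compl_empty, connectedComponentIn_univ]
    exact PreconnectedSpace.connectedComponent_eq_univ x
  obtain ⟨L, hL, hHL, 𝒮, hSfin, _, hdich⟩ := aux_big_components hH hne
  apply hSfin.subset
  rintro E ⟨hcc, hnc⟩
  rcases hdich E hcc with h | h
  · exact absurd (hL.of_isClosed_subset isClosed_closure (hL.isClosed.closure_subset_iff.2 h))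
      hnc
  · exact h

/-- Every end of `K` contains an end of any nonempty compact `H ⊇ K`. -/
lemma aux_exists_end_subset {K H : Set X} (hK : IsCompact K) (hH : IsCompact H)
    (hne : H.Nonempty) (hKH : K ⊆ H) {E : Set X} (hE : IsRelEnd K E) :
    ∃ F, IsRelEnd H F ∧ F ⊆ E := by
  obtain ⟨hEcc, hEnc⟩ := hE
  obtain ⟨L, hL, hHL, 𝒮, hSfin, hScc, hdich⟩ := aux_big_components hH hne
  by_contra hno
  push_neg at hno
  -- every component of Hᶜ contained in E is relatively compact
  have hrc : ∀ C, IsCCIn Hᶜ C → C ⊆ E → IsCompact (closure C) := by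
    intro C hC hCE
    by_contra hCnc
    exact hno C ⟨hC, hCnc⟩ hCE
  set 𝒮' := {C ∈ 𝒮 | C ⊆ E} with h𝒮'
  have h𝒮'fin : 𝒮'.Finite := hSfin.subset (Set.sep_subset _ _)
  set M := H ∪ L ∪ ⋃ C ∈ 𝒮', closure C with hM
  have hMc : IsCompact M :=
    (hH.union hL).union (h𝒮'fin.isCompact_biUnion fun C hC => hrc C (hScc C hC.1) hC.2)
  have hEM : E ⊆ M := by
    intro x hxE
    by_cases hxH : x ∈ H
    · exact Or.inl (Or.inl hxH)
    have hxE' : connectedComponentIn Kᶜ x = E := (aux_end_eq_of_mem hEcc hxE).symm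
    have hCE : connectedComponentIn Hᶜ x ⊆ E := by
      rw [← hxE']
      exact connectedComponentIn_mono x (Set.compl_subset_compl.2 hKH)
    have hxC : x ∈ connectedComponentIn Hᶜ x := mem_connectedComponentIn hxH
    rcases hdich _ ⟨x, hxH, rfl⟩ with h | h
    · exact Or.inl (Or.inr (h hxC))
    · exact Or.inr (Set.mem_biUnion ⟨h, hCE⟩ (subset_closure hxC))
  have hclEM : closure E ⊆ M := by
    intro z hz
    by_cases hzK : z ∈ K
    · exact Or.inl (Or.inl (hKH hzK))
    · have hzE : z ∈ E := by
        obtain ⟨x, hx, rfl⟩ := hEcc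
        exact aux_closure_ccIn hK.isClosed.isOpen_compl ⟨hz, hzK⟩
      exact hEM hzE
  exact hEnc (hMc.of_isClosed_subset isClosed_closure hclEM)

/-- Monotonicity of the number of ends. -/
lemma aux_ncard_mono {K H : Set X} (hK : IsCompact K) (hH : IsCompact H)
    (hne : H.Nonempty) (hKH : K ⊆ H) : (relEnds K).ncard ≤ (relEnds H).ncard := by
  classical
  set g : Set X → Set X := fun E =>
    if h : IsRelEnd K E then (aux_exists_end_subset hK hH hne hKH h).choose else ∅ with hg
  have hg1 : ∀ E, IsRelEnd K E → IsRelEnd H (g E) := by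
    intro E hE
    simp only [hg, dif_pos hE]
    exact (aux_exists_end_subset hK hH hne hKH hE).choose_spec.1
  have hg2 : ∀ E, (h : IsRelEnd K E) → g E ⊆ E := by
    intro E hE
    simp only [hg, dif_pos hE]
    exact (aux_exists_end_subset hK hH hne hKH hE).choose_spec.2
  have hinj : Set.InjOn g (relEnds K) := by
    intro E₁ h₁ E₂ h₂ hEq
    obtain ⟨z, hz⟩ := aux_end_nonempty (hg1 E₁ h₁).1
    have hz1 : z ∈ E₁ := hg2 E₁ h₁ hz
    have hz2 : z ∈ E₂ := hg2 E₂ h₂ (hEq ▸ hz)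
    rw [aux_end_eq_of_mem h₁.1 hz1, aux_end_eq_of_mem h₂.1 hz2]
  calc (relEnds K).ncard = (g '' relEnds K).ncard := (Set.ncard_image_of_injOn hinj).symm
    _ ≤ (relEnds H).ncard := by
        apply Set.ncard_le_ncard _ (aux_relEnds_finite hH)
        rintro _ ⟨E, hE, rfl⟩
        exact hg1 E hE

end Aux

/-- If K ↦ n(K) is bounded then it attains its supremum at some compact K₀, and for every
such K₀ and every compact H ⊇ K₀ one has n(H) = n(K₀). -/
theorem relEnds_card_attains_sup {X : Type*} [TopologicalSpace X] [Nonempty X] [ConnectedSpace X]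
    [LocallyCompactSpace X] [LocallyConnectedSpace X] [SigmaCompactSpace X] [T2Space X]
    (hbd : ∃ N : ℕ, ∀ K : Set X, IsCompact K → (relEnds K).ncard ≤ N) :
    (∃ K₀ : Set X, IsCompact K₀ ∧
        ∀ K : Set X, IsCompact K → (relEnds K).ncard ≤ (relEnds K₀).ncard) ∧
    ∀ K₀ : Set X, IsCompact K₀ →
      (∀ K : Set X, IsCompact K → (relEnds K).ncard ≤ (relEnds K₀).ncard) →
      ∀ H : Set X, IsCompact H → K₀ ⊆ H → (relEnds H).ncard = (relEnds K₀).ncard := by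
  obtain ⟨N, hN⟩ := hbd
  constructor
  · set S : Set ℕ := {n | ∃ K : Set X, IsCompact K ∧ (relEnds K).ncard = n} with hS
    have hSne : S.Nonempty := ⟨(relEnds (∅ : Set X)).ncard, ∅, isCompact_empty, rfl⟩
    have hSbdd : BddAbove S := ⟨N, by rintro n ⟨K, hK, rfl⟩; exact hN K hK⟩
    obtain ⟨K₀, hK₀, hcard⟩ := Nat.sSup_mem hSne hSbdd
    refine ⟨K₀, hK₀, fun K hK => ?_⟩
    rw [hcard]
    exact le_csSup hSbdd ⟨K, hK, rfl⟩
  · intro K₀ hK₀ hmax H hH hKH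
    rcases Set.eq_empty_or_nonempty H with rfl | hne
    · rw [Set.subset_empty_iff.1 hKH]
    · exact le_antisymm (hmax H hH) (aux_ncard_mono hK₀ hH hne hKH)
end
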